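/- For every δ ∈ [0,1), every C > 0, every β > 0, and every integer k ≥ 1, there exist disjoint finite sets A, B ⊆ [0,1]² with A ∪ B nonempty and 0 < |A| − |B| < β·|A ∪ B|, such that for every partition of [0,1]² into measurable sets D₁, …, D_k, if (a) for every i, (1−δ)·⌊|A∪B|/k⌋ ≤ |(A∪B) ∩ D_i| ≤ (1+δ)·⌈|A∪B|/k⌉, and (b) for every i there exist L_i ≥ 0 and a map γ_i : ℝ → ℝ² that is 1-Lipschitz on [0, L_i] with frontier(D_i) ⊆ γ_i '' [0, L_i] and L_i² ≤ C·vol(D_i), then A strictly wins every district, i.e., |A ∩ D_i| > |B ∩ D_i| for every i ∈ {1, …, k}. -/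

import Mathlib

/-!
Cut `[0,1]²` into an `N × N` grid and put at the centre of every cell a tiny cluster of `p + 1`
voters for `A` and `p` for `B`, where `1 / (2p + 1) < β`. A district containing a whole cluster
gains one vote of surplus for `A`; a cluster met but not contained by a district has a boundary
point of the district within `1/(8N)` of its cell centre. The boundary is a `1`-Lipschitz curve of
length `L ≤ √|C|` and the centres are `1/N`-separated, so at most `4NL + 1` clusters are split, each
costing `A` at most `p` votes. The one-person-one-vote condition makes every district meet about
`N²/k` clusters, which beats `(p + 1)(4N√|C| + 1)` once `N` is large.
-/

open MeasureTheory Metric Set ENNReal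

noncomputable section

/-- The plane `ℝ²` with the Euclidean metric. -/
abbrev Plane := EuclideanSpace ℝ (Fin 2)

/-- The closed unit square `[0,1]² ⊆ ℝ²`. -/
def unitSq : Set Plane := {x | x 0 ∈ Set.Icc (0 : ℝ) 1 ∧ x 1 ∈ Set.Icc (0 : ℝ) 1}

theorem IsPreconnected.inter_frontier_nonempty {X : Type*} [TopologicalSpace X] {s D : Set X}
    (hs : IsPreconnected s) (hin : (s ∩ D).Nonempty) (hout : (s \ D).Nonempty) :
    (s ∩ frontier D).Nonempty := by
  by_contra h
  have hsub : s ⊆ interior D ∪ interior Dᶜ := by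
    rw [← compl_frontier_eq_union_interior]
    exact fun x hx hxD => h ⟨x, hx, hxD⟩
  have hdisj : Disjoint (interior D) (interior Dᶜ) :=
    (disjoint_compl_right (a := D)).mono interior_subset interior_subset
  obtain ⟨x, hxs, hxD⟩ := hin
  obtain ⟨y, hys, hyD⟩ := hout
  rcases hs.subset_or_subset isOpen_interior isOpen_interior hdisj hsub with hD | hDc
  · exact hyD (interior_subset (hD hys))
  · exact interior_subset (hDc hxs) hxD

theorem abs_sub_lt_of_floor_div_eq {a b h : ℝ} (ha : 0 ≤ a) (hb : 0 ≤ b) (hh : 0 < h)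
    (hab : ⌊a / h⌋₊ = ⌊b / h⌋₊) : |a - b| < h := by
  have ha' := Nat.floor_le (div_nonneg ha hh.le)
  have hb' := Nat.floor_le (div_nonneg hb hh.le)
  have ha'' := Nat.lt_floor_add_one (a / h)
  have hb'' := Nat.lt_floor_add_one (b / h)
  rw [hab] at ha' ha''
  have : |a / h - b / h| < 1 := abs_sub_lt_iff.mpr ⟨by linarith, by linarith⟩
  rwa [← sub_div, abs_div, abs_of_pos hh, div_lt_one hh] at this

theorem card_le_of_separated_near_lipschitzOnWith {X ι : Type*} [PseudoMetricSpace X]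
    {γ : ℝ → X} {L r h ρ : ℝ} (hγ : LipschitzOnWith 1 γ (Icc 0 L)) (hL : 0 ≤ L) (hh : 0 < h)
    (hρ : 2 * r + h ≤ ρ) {z : ι → X} {S : Finset ι}
    (hsep : ∀ c ∈ S, ∀ c' ∈ S, c ≠ c' → ρ ≤ dist (z c) (z c'))
    (hnear : ∀ c ∈ S, ∃ t ∈ Icc 0 L, dist (z c) (γ t) ≤ r) :
    (S.card : ℝ) ≤ L / h + 1 := by
  choose! t ht hdist using hnear
  have hbin : Set.MapsTo (fun c => ⌊t c / h⌋₊) S (Finset.range (⌊L / h⌋₊ + 1)) := by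
    intro c hc
    simp only [Finset.coe_range, Set.mem_Iio, Nat.lt_add_one_iff]
    exact Nat.floor_le_floor (div_le_div_of_nonneg_right (ht c hc).2 hh.le)
  have hinj : Set.InjOn (fun c => ⌊t c / h⌋₊) S := by
    intro c hc c' hc' hcc'
    by_contra hne
    have hclose : dist (t c) (t c') < h :=
      abs_sub_lt_of_floor_div_eq (ht c hc).1 (ht c' hc').1 hh hcc'
    have hγcc' : dist (γ (t c)) (γ (t c')) ≤ dist (t c) (t c') := by
      simpa using hγ.dist_le_mul _ (ht c hc) _ (ht c' hc')
    have := dist_triangle4 (z c) (γ (t c)) (γ (t c')) (z c')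
    linarith [hsep c hc c' hc' hne, hdist c hc, dist_comm (z c') (γ (t c')) ▸ hdist c' hc']
  calc (S.card : ℝ) ≤ (⌊L / h⌋₊ + 1 : ℕ) := by
        exact_mod_cast (Finset.card_le_card_of_injOn _ hbin hinj).trans (Finset.card_range _).le
    _ ≤ L / h + 1 := by push_cast; linarith [Nat.floor_le (div_nonneg hL hh.le)]

theorem le_sqrt_abs_of_sq_le_mul {L C v : ℝ} (hL : 0 ≤ L) (hv0 : 0 ≤ v) (hv1 : v ≤ 1)
    (h : L ^ 2 ≤ C * v) : L ≤ √|C| := by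
  rw [Real.le_sqrt hL (abs_nonneg C)]
  calc L ^ 2 ≤ C * v := h
    _ ≤ |C| * v := by gcongr; exact le_abs_self C
    _ ≤ |C| := mul_le_of_le_one_right (abs_nonneg C) hv1

theorem min_one_mul_sub_one_le_of_mul_floor_le {a x y : ℝ} (ha : 0 ≤ a) (hx : 0 ≤ x)
    (h : a * ⌊x⌋ ≤ y) : min a 1 * x - 1 ≤ y := by
  have hfloor : (0 : ℝ) ≤ ⌊x⌋ := by exact_mod_cast Int.floor_nonneg.mpr hx
  have hmin : 0 ≤ min a 1 := le_min ha zero_le_one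
  calc min a 1 * x - 1 ≤ min a 1 * (⌊x⌋ + 1) - 1 := by gcongr; exact (Int.lt_floor_add_one x).le
    _ ≤ a * ⌊x⌋ := by nlinarith [min_le_left a 1, min_le_right a 1]
    _ ≤ y := h

theorem Fin.val_div_mul_le_inv {q : ℕ} (j : Fin q) {x : ℝ} (hx : 0 ≤ x) :
    (j : ℝ) / (x * q) ≤ x⁻¹ :=
  calc (j : ℝ) / (x * q) = (j / q) * x⁻¹ := by ring
    _ ≤ 1 * x⁻¹ := by
      gcongr
      exact div_le_one_of_le₀ (by exact_mod_cast j.is_lt.le) (Nat.cast_nonneg q)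
    _ = x⁻¹ := one_mul _

theorem Set.ncard_image_coe_inter {α β : Type*} {f : α → β} (hf : Function.Injective f)
    (s : Finset α) (D : Set β) [DecidablePred (f · ∈ D)] :
    (f '' s ∩ D).ncard = (s.filter (f · ∈ D)).card := by
  rw [← Set.image_inter_preimage, Set.ncard_image_of_injective _ hf, ← Set.ncard_coe_finset,
    Finset.coe_filter]
  rfl

section Clusters

open scoped Classical

/- Every cell `c : ι` carries a cluster of voters `(c, j)`, `j : κ`; the predicate `P` marks the
voters living in a given district. -/

variable {ι κ : Type*} [Fintype ι] (P : ι × κ → Prop)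

theorem card_filter_univ_product (s : Finset κ) :
    ((Finset.univ ×ˢ s).filter P).card = ∑ c, (s.filter fun j => P (c, j)).card := by
  simp only [Finset.card_filter, Finset.sum_product]

variable [Fintype κ]

def fullCells : Finset ι := Finset.univ.filter fun c => ∀ j, P (c, j)

def splitCells : Finset ι := Finset.univ.filter fun c => (∃ j, P (c, j)) ∧ ∃ j, ¬P (c, j)

theorem mem_splitCells {P : ι × κ → Prop} {c : ι} :
    c ∈ splitCells P ↔ (∃ j, P (c, j)) ∧ ∃ j, ¬P (c, j) := by
  simp [splitCells]

theorem card_filter_le_card_mul_card_fullCells_add_card_splitCells :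
    (Finset.univ.filter P).card
      ≤ Fintype.card κ * ((fullCells P).card + (splitCells P).card) := by
  rw [← Finset.univ_product_univ, card_filter_univ_product, fullCells, splitCells,
    Finset.card_filter, Finset.card_filter, ← Finset.sum_add_distrib, Finset.mul_sum]
  refine Finset.sum_le_sum fun c _ => ?_
  by_cases hfull : ∀ j, P (c, j)
  · simp [hfull]
  have hout : ∃ j, ¬P (c, j) := not_forall.mp hfull
  rw [if_neg hfull, zero_add]
  by_cases hmet : ∃ j, P (c, j)
  · rw [if_pos ⟨hmet, hout⟩, mul_one]
    exact Finset.card_filter_le _ _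
  · push Not at hmet
    simp [hmet]

theorem card_fullCells_sub_le_card_filter_sub_card_filter [DecidableEq κ] (s : Finset κ)
    (hs : sᶜ.card < s.card) :
    ((fullCells P).card : ℤ) - sᶜ.card * (splitCells P).card
      ≤ ((Finset.univ ×ˢ s).filter P).card - ((Finset.univ ×ˢ sᶜ).filter P).card := by
  rw [card_filter_univ_product, card_filter_univ_product, fullCells, splitCells,
    Finset.card_filter, Finset.card_filter]
  push_cast
  rw [Finset.mul_sum, ← Finset.sum_sub_distrib, ← Finset.sum_sub_distrib]
  refine Finset.sum_le_sum fun c _ => ?_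
  by_cases hfull : ∀ j, P (c, j)
  · simp [hfull]
    omega
  have hout : ∃ j, ¬P (c, j) := not_forall.mp hfull
  rw [if_neg hfull]
  by_cases hmet : ∃ j, P (c, j)
  · rw [if_pos ⟨hmet, hout⟩]
    have := Finset.card_filter_le sᶜ fun j => P (c, j)
    omega
  · push Not at hmet
    simp [hmet]

end Clusters

theorem volume_unitSq : volume unitSq = 1 := by
  have hpre : unitSq = (MeasurableEquiv.toLp 2 (Fin 2 → ℝ)).symm ⁻¹'
      (univ.pi fun _ : Fin 2 => Icc (0 : ℝ) 1) := by
    ext x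
    simp [unitSq, Pi.le_def, Fin.forall_fin_two]
    tauto
  rw [hpre, (EuclideanSpace.volume_preserving_symm_measurableEquiv_toLp (Fin 2)).measure_preimage
    (MeasurableSet.univ_pi fun _ => measurableSet_Icc).nullMeasurableSet, volume_pi_pi]
  simp [Real.volume_Icc]

def cellCoord (N : ℕ) (a : Fin N) : ℝ := ((a : ℝ) + 1 / 2) / N

def cellCenter (N : ℕ) (c : Fin N × Fin N) : Plane := !₂[cellCoord N c.1, cellCoord N c.2]

def voter (N q : ℕ) (v : (Fin N × Fin N) × Fin q) : Plane :=
  cellCenter N v.1 + EuclideanSpace.single 0 ((v.2 : ℝ) / (8 * N * q))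

theorem inv_le_abs_cellCoord_sub {N : ℕ} {a b : Fin N} (h : a ≠ b) :
    (N : ℝ)⁻¹ ≤ |cellCoord N a - cellCoord N b| := by
  have hN : (0 : ℝ) < N := by exact_mod_cast a.pos
  have hab : (1 : ℝ) ≤ |(a : ℝ) - b| := by
    exact_mod_cast Int.one_le_abs (sub_ne_zero.mpr (Int.ofNat_inj.not.mpr (Fin.val_ne_of_ne h)))
  rw [cellCoord, cellCoord, ← sub_div, add_sub_add_right_eq_sub, abs_div, abs_of_pos hN,
    ← one_div]
  exact div_le_div_of_nonneg_right hab hN.le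

theorem inv_le_dist_cellCenter {N : ℕ} {c c' : Fin N × Fin N} (h : c ≠ c') :
    (N : ℝ)⁻¹ ≤ dist (cellCenter N c) (cellCenter N c') := by
  rcases not_and_or.mp (Prod.ext_iff.not.mp h) with h | h
  · simpa [cellCenter, Real.dist_eq] using
      (inv_le_abs_cellCoord_sub h).trans (PiLp.dist_apply_le (cellCenter N c) (cellCenter N c') 0)
  · simpa [cellCenter, Real.dist_eq] using
      (inv_le_abs_cellCoord_sub h).trans (PiLp.dist_apply_le (cellCenter N c) (cellCenter N c') 1)

theorem dist_voter_cellCenter {N q : ℕ} (v : (Fin N × Fin N) × Fin q) :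
    dist (voter N q v) (cellCenter N v.1) ≤ (8 * N : ℝ)⁻¹ := by
  rw [voter, dist_self_add_left, PiLp.norm_single, Real.norm_eq_abs, abs_of_nonneg (by positivity)]
  exact v.2.val_div_mul_le_inv (by positivity)

theorem voter_injective (N q : ℕ) : Function.Injective (voter N q) := by
  rintro ⟨c, j⟩ ⟨c', j'⟩ h
  have hN : (0 : ℝ) < N := by exact_mod_cast c.1.pos
  have hc : c = c' := by
    by_contra hne
    have hc : dist (voter N q (c', j')) (cellCenter N c) ≤ (8 * N : ℝ)⁻¹ :=
      h ▸ dist_voter_cellCenter (c, j)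
    have : (8 * N : ℝ)⁻¹ + (8 * N : ℝ)⁻¹ < (N : ℝ)⁻¹ := by field_simp; norm_num
    linarith [inv_le_dist_cellCenter hne, dist_voter_cellCenter (c', j'),
      dist_triangle_left (cellCenter N c) (cellCenter N c') (voter N q (c', j'))]
  subst hc
  have hq : (0 : ℝ) < q := by exact_mod_cast j.pos
  have := congrArg (· 0) (add_left_cancel h)
  simp only [PiLp.single_apply, if_true] at this
  rw [div_left_inj' (by positivity), Nat.cast_inj] at this
  exact Prod.ext rfl (Fin.ext this)

theorem cellCoord_mem_Icc {N : ℕ} (a : Fin N) :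
    cellCoord N a ∈ Icc 0 (1 - (2 * N : ℝ)⁻¹) := by
  have hN : (0 : ℝ) < N := by exact_mod_cast a.pos
  have ha : (a : ℝ) + 1 ≤ N := by exact_mod_cast a.is_lt
  refine ⟨by unfold cellCoord; positivity, ?_⟩
  rw [cellCoord, div_le_iff₀ hN]
  field_simp
  linarith

theorem voter_mem_unitSq {N q : ℕ} (v : (Fin N × Fin N) × Fin q) : voter N q v ∈ unitSq := by
  have hN : (0 : ℝ) < N := by exact_mod_cast v.1.1.pos
  obtain ⟨hx0, hx1⟩ := cellCoord_mem_Icc v.1.1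
  obtain ⟨hy0, hy1⟩ := cellCoord_mem_Icc v.1.2
  have hoff := v.2.val_div_mul_le_inv (by positivity : (0 : ℝ) ≤ 8 * N)
  have h82 : (8 * N : ℝ)⁻¹ ≤ (2 * N : ℝ)⁻¹ := by gcongr; norm_num
  have hoff0 : (0 : ℝ) ≤ (v.2 : ℝ) / (8 * N * q) := by positivity
  simp only [unitSq, voter, cellCenter, mem_ofPred_eq, PiLp.add_apply, PiLp.single_apply]
  simp only [Matrix.cons_val_zero, Matrix.cons_val_one, if_true, one_ne_zero, if_false, add_zero,
    mem_Icc]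
  refine ⟨⟨?_, ?_⟩, ⟨?_, ?_⟩⟩ <;> linarith

theorem exists_frontier_near_cellCenter {N q : ℕ} {D : Set Plane} {c : Fin N × Fin N}
    (hc : c ∈ splitCells fun v => voter N q v ∈ D) :
    ∃ x ∈ frontier D, dist x (cellCenter N c) ≤ (8 * N : ℝ)⁻¹ := by
  obtain ⟨⟨j, hjD⟩, ⟨j', hj'D⟩⟩ := mem_splitCells.mp hc
  have hball : segment ℝ (voter N q (c, j)) (voter N q (c, j'))
      ⊆ closedBall (cellCenter N c) (8 * N : ℝ)⁻¹ :=
    (convex_closedBall _ _).segment_subset (dist_voter_cellCenter _) (dist_voter_cellCenter _)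
  obtain ⟨x, hxseg, hxD⟩ := (convex_segment _ _).isPreconnected.inter_frontier_nonempty
    ⟨_, left_mem_segment ℝ _ _, hjD⟩ ⟨_, right_mem_segment ℝ _ _, hj'D⟩
  exact ⟨x, hxD, hball hxseg⟩

theorem card_splitCells_le {N q : ℕ} (hN : 0 < N) {D : Set Plane} {L : ℝ} {γ : ℝ → Plane}
    (hL : 0 ≤ L) (hγ : LipschitzOnWith 1 γ (Icc 0 L)) (hD : frontier D ⊆ γ '' Icc 0 L) :
    ((splitCells fun v => voter N q v ∈ D).card : ℝ) ≤ 4 * N * L + 1 := by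
  have hN' : (0 : ℝ) < N := by exact_mod_cast hN
  have hnear : ∀ c ∈ splitCells (fun v => voter N q v ∈ D),
      ∃ t ∈ Icc 0 L, dist (cellCenter N c) (γ t) ≤ (8 * N : ℝ)⁻¹ := by
    intro c hc
    obtain ⟨x, hxD, hx⟩ := exists_frontier_near_cellCenter hc
    obtain ⟨t, ht, rfl⟩ := hD hxD
    exact ⟨t, ht, dist_comm (γ t) _ ▸ hx⟩
  have hρ : 2 * (8 * N : ℝ)⁻¹ + (4 * N : ℝ)⁻¹ ≤ (N : ℝ)⁻¹ := by
    field_simp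
    norm_num
  have := card_le_of_separated_near_lipschitzOnWith hγ hL (by positivity) hρ
    (fun c _ c' _ hcc' => inv_le_dist_cellCenter hcc') hnear
  rwa [div_inv_eq_mul, mul_comm L] at this

def seatsA (p : ℕ) : Finset (Fin (2 * p + 1)) := Finset.Iic ⟨p, by omega⟩

theorem card_seatsA (p : ℕ) : (seatsA p).card = p + 1 := Fin.card_Iic _

theorem card_compl_seatsA (p : ℕ) : (seatsA p)ᶜ.card = p := by
  rw [Finset.card_compl, card_seatsA, Fintype.card_fin]
  omega

def votersA (N p : ℕ) : Set Plane :=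
  voter N (2 * p + 1) '' ↑(Finset.univ ×ˢ seatsA p : Finset ((Fin N × Fin N) × _))

def votersB (N p : ℕ) : Set Plane :=
  voter N (2 * p + 1) '' ↑(Finset.univ ×ˢ (seatsA p)ᶜ : Finset ((Fin N × Fin N) × _))

theorem votersA_union_votersB (N p : ℕ) :
    votersA N p ∪ votersB N p = range (voter N (2 * p + 1)) := by
  rw [votersA, votersB, ← Set.image_union, ← Finset.coe_union, ← Finset.product_union,
    Finset.union_compl, Finset.univ_product_univ, Finset.coe_univ, Set.image_univ]

theorem disjoint_votersA_votersB (N p : ℕ) : Disjoint (votersA N p) (votersB N p) := by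
  rw [votersA, votersB, Set.disjoint_image_iff (voter_injective _ _), Finset.disjoint_coe,
    Finset.disjoint_product]
  exact Or.inr disjoint_compl_right

theorem ncard_votersA (N p : ℕ) : (votersA N p).ncard = N * N * (p + 1) := by
  rw [votersA, Set.ncard_image_of_injective _ (voter_injective _ _), Set.ncard_coe_finset,
    Finset.card_product, Finset.card_univ, card_seatsA, Fintype.card_prod, Fintype.card_fin]

theorem ncard_votersB (N p : ℕ) : (votersB N p).ncard = N * N * p := by
  rw [votersB, Set.ncard_image_of_injective _ (voter_injective _ _), Set.ncard_coe_finset,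
    Finset.card_product, Finset.card_univ, card_compl_seatsA, Fintype.card_prod, Fintype.card_fin]

theorem finite_votersA (N p : ℕ) : (votersA N p).Finite := (Finset.finite_toSet _).image _

theorem finite_votersB (N p : ℕ) : (votersB N p).Finite := (Finset.finite_toSet _).image _

theorem ncard_votersA_union_votersB (N p : ℕ) :
    (votersA N p ∪ votersB N p).ncard = N * N * (2 * p + 1) := by
  rw [Set.ncard_union_eq (disjoint_votersA_votersB N p) (finite_votersA N p) (finite_votersB N p),
    ncard_votersA, ncard_votersB]
  ring

theorem ncard_votersB_lt_ncard_votersA {N : ℕ} (hN : 0 < N) (p : ℕ) :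
    (votersB N p).ncard < (votersA N p).ncard := by
  rw [ncard_votersA, ncard_votersB]
  exact Nat.mul_lt_mul_of_pos_left p.lt_succ_self (Nat.mul_pos hN hN)

theorem ncard_votersA_sub_ncard_votersB_lt {N p : ℕ} (hN : 0 < N) {β : ℝ}
    (hβ : 1 < β * (2 * p + 1)) :
    ((votersA N p).ncard : ℝ) - (votersB N p).ncard < β * (votersA N p ∪ votersB N p).ncard := by
  have hN2 : (0 : ℝ) < N * N := by positivity
  rw [ncard_votersA_union_votersB, ncard_votersA, ncard_votersB]
  push_cast
  nlinarith [mul_lt_mul_of_pos_left hβ hN2]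

theorem votersA_union_votersB_subset_unitSq (N p : ℕ) : votersA N p ∪ votersB N p ⊆ unitSq :=
  votersA_union_votersB N p ▸ range_subset_iff.mpr voter_mem_unitSq

open scoped Classical in
theorem ncard_votersB_inter_lt_ncard_votersA_inter {N p k : ℕ} {c s L : ℝ} {γ : ℝ → Plane}
    {D : Set Plane} (hN : 0 < N) (hk : 0 < k) (hNk : k * ((p + 1) * (4 * s + 1) + 2) ≤ c * N)
    (hL : 0 ≤ L) (hLs : L ≤ s) (hγ : LipschitzOnWith 1 γ (Icc 0 L))
    (hD : frontier D ⊆ γ '' Icc 0 L)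
    (hcount : c * (N * N * (2 * p + 1) / k) - 1 ≤ ((votersA N p ∪ votersB N p) ∩ D).ncard) :
    (votersB N p ∩ D).ncard < (votersA N p ∩ D).ncard := by
  set P : (Fin N × Fin N) × Fin (2 * p + 1) → Prop := fun v => voter N (2 * p + 1) v ∈ D
  set F := (fullCells P).card
  set S := (splitCells P).card
  have hsweep : (F : ℤ) - p * S ≤ (votersA N p ∩ D).ncard - (votersB N p ∩ D).ncard := by
    rw [votersA, votersB, Set.ncard_image_coe_inter (voter_injective _ _),
      Set.ncard_image_coe_inter (voter_injective _ _)]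
    have := card_fullCells_sub_le_card_filter_sub_card_filter P (seatsA p)
      (by rw [card_seatsA, card_compl_seatsA]; omega)
    rwa [card_compl_seatsA] at this
  have htotal : ((votersA N p ∪ votersB N p) ∩ D).ncard ≤ (2 * p + 1) * (F + S) := by
    rw [votersA_union_votersB, ← Set.image_univ, ← Finset.coe_univ,
      Set.ncard_image_coe_inter (voter_injective _ _)]
    exact (card_filter_le_card_mul_card_fullCells_add_card_splitCells P).trans_eq
      (by rw [Fintype.card_fin])
  have hS : (S : ℝ) ≤ 4 * N * s + 1 :=
    (card_splitCells_le hN hL hγ hD).trans (by gcongr)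
  have hmet : (N : ℝ) * ((p + 1) * (4 * s + 1) + 2) - 1 ≤ F + S := by
    have hk' : (0 : ℝ) < k := by exact_mod_cast hk
    have hcN : N * ((p + 1) * (4 * s + 1) + 2) * (2 * p + 1) ≤ c * (N * N * (2 * p + 1) / k) := by
      rw [← mul_div_assoc, le_div_iff₀ hk']
      nlinarith [mul_le_mul_of_nonneg_right hNk (by positivity : (0 : ℝ) ≤ N * (2 * p + 1))]
    have htotal' : ((votersA N p ∪ votersB N p) ∩ D).ncard ≤ (2 * p + 1 : ℝ) * (F + S) := by
      exact_mod_cast htotal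
    nlinarith
  have hF : (p : ℝ) * S < F := by
    have hN' : (1 : ℝ) ≤ N := by exact_mod_cast hN
    nlinarith
  have : (p : ℤ) * S < F := by exact_mod_cast hF
  omega

theorem majority_sweeps_general (δ C β : ℝ) (hδ1 : δ < 1) (hβ : 0 < β) (k : ℕ) :
    ∃ A B : Set Plane, A.Finite ∧ B.Finite ∧ Disjoint A B ∧ A ⊆ unitSq ∧ B ⊆ unitSq ∧
      (A ∪ B).Nonempty ∧ B.ncard < A.ncard ∧
      (A.ncard : ℝ) - (B.ncard : ℝ) < β * ((A ∪ B).ncard : ℝ) ∧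
      ∀ D : Fin k → Set Plane,
        (∀ i, MeasurableSet (D i)) →
        (Pairwise fun i j => Disjoint (D i) (D j)) →
        (⋃ i, D i) = unitSq →
        (∀ i, (1 - δ) * (⌊((A ∪ B).ncard : ℝ) / (k : ℝ)⌋ : ℝ)
                ≤ (((A ∪ B) ∩ D i).ncard : ℝ) ∧
              (((A ∪ B) ∩ D i).ncard : ℝ)
                ≤ (1 + δ) * (⌈((A ∪ B).ncard : ℝ) / (k : ℝ)⌉ : ℝ)) →
        (∀ i, ∃ L : ℝ, 0 ≤ L ∧ ∃ γ : ℝ → Plane,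
            LipschitzOnWith 1 γ (Set.Icc 0 L) ∧
            frontier (D i) ⊆ γ '' Set.Icc 0 L ∧
            L ^ 2 ≤ C * (volume (D i)).toReal) →
        ∀ i, (B ∩ D i).ncard < (A ∩ D i).ncard := by
  obtain ⟨p, hp⟩ := exists_nat_gt β⁻¹
  have hβp : 1 < β * (2 * p + 1) := by
    nlinarith [(inv_lt_iff_one_lt_mul₀' hβ).mp hp, (Nat.cast_nonneg p : (0 : ℝ) ≤ p)]
  set c := min (1 - δ) 1
  have hc : 0 < c := lt_min (by linarith) one_pos
  obtain ⟨N, hN⟩ := exists_nat_gt (k * ((p + 1) * (4 * √|C| + 1) + 2) / c)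
  have hN0 : 0 < N := by exact_mod_cast (by positivity : (0 : ℝ) ≤ _).trans_lt hN
  have hNk : k * ((p + 1) * (4 * √|C| + 1) + 2) ≤ c * N := by
    rw [div_lt_iff₀ hc] at hN; linarith
  have hsub := votersA_union_votersB_subset_unitSq N p
  have hBA := ncard_votersB_lt_ncard_votersA hN0 p
  refine ⟨votersA N p, votersB N p, finite_votersA N p, finite_votersB N p,
    disjoint_votersA_votersB N p, subset_union_left.trans hsub, subset_union_right.trans hsub,
    (nonempty_of_ncard_ne_zero (by omega)).mono subset_union_left, hBA,
    ncard_votersA_sub_ncard_votersB_lt hN0 hβp, ?_⟩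
  intro D _ _ hcover hcount hcurve i
  obtain ⟨L, hL, γ, hγ, hD, hLC⟩ := hcurve i
  have hvol : (volume (D i)).toReal ≤ 1 :=
    ENNReal.toReal_le_of_le_ofReal zero_le_one
      (by rw [ofReal_one, ← volume_unitSq, ← hcover]; exact measure_mono (subset_iUnion D i))
  refine ncard_votersB_inter_lt_ncard_votersA_inter hN0 i.pos hNk hL
    (le_sqrt_abs_of_sq_le_mul hL toReal_nonneg hvol hLC) hγ hD ?_
  have hn : ((votersA N p ∪ votersB N p).ncard : ℝ) = N * N * (2 * p + 1) := by
    exact_mod_cast ncard_votersA_union_votersB N p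
  rw [← hn]
  exact min_one_mul_sub_one_le_of_mul_floor_le (by linarith) (by positivity) (hcount i).1

/-- **Core step of the paper's Theorem 1.**
For all `δ ∈ [0,1)`, `C > 0`, `β > 0` and `k ≥ 1` there exist disjoint finite sets
`A, B ⊆ [0,1]²` with `0 < |A| - |B| < β|A ∪ B|` such that for any measurable partition of
`[0,1]²` into districts `D₁, …, D_k` satisfying the one-person-one-vote condition with
parameter `δ` and the Polsby–Popper compactness condition (each `frontier (D i)` is covered
by a `1`-Lipschitz curve of length `L i` with `L i ^ 2 ≤ C · vol (D i)`), party `A` strictly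
wins every district. -/
theorem majority_sweeps (δ C β : ℝ) (hδ0 : 0 ≤ δ) (hδ1 : δ < 1) (hC : 0 < C)
    (hβ : 0 < β) (k : ℕ) (hk : 1 ≤ k) :
    ∃ A B : Set Plane, A.Finite ∧ B.Finite ∧ Disjoint A B ∧ A ⊆ unitSq ∧ B ⊆ unitSq ∧
      (A ∪ B).Nonempty ∧ B.ncard < A.ncard ∧
      (A.ncard : ℝ) - (B.ncard : ℝ) < β * ((A ∪ B).ncard : ℝ) ∧
      ∀ D : Fin k → Set Plane,
        (∀ i, MeasurableSet (D i)) →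
        (Pairwise fun i j => Disjoint (D i) (D j)) →
        (⋃ i, D i) = unitSq →
        (∀ i, (1 - δ) * (⌊((A ∪ B).ncard : ℝ) / (k : ℝ)⌋ : ℝ)
                ≤ (((A ∪ B) ∩ D i).ncard : ℝ) ∧
              (((A ∪ B) ∩ D i).ncard : ℝ)
                ≤ (1 + δ) * (⌈((A ∪ B).ncard : ℝ) / (k : ℝ)⌉ : ℝ)) →
        (∀ i, ∃ L : ℝ, 0 ≤ L ∧ ∃ γ : ℝ → Plane,
            LipschitzOnWith 1 γ (Set.Icc 0 L) ∧
            frontier (D i) ⊆ γ '' Set.Icc 0 L ∧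
            L ^ 2 ≤ C * (volume (D i)).toReal) →
        ∀ i, (B ∩ D i).ncard < (A ∩ D i).ncard :=
  majority_sweeps_general δ C β hδ1 hβ k

end
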